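/- arXiv:2308.15887 — 2 statements merged into one kernel-verified Lean document; each statement's English description precedes it below -/
import Mathlib

section
/- (Lemma 1, atomic form) Suppose C = (f, g) is a CLIP-like model that respects basic descriptions and disjunction, and I is describable by A. Then there exists a nonzero vector v ∈ L such that: for every image i ∈ I there is a real t > 0 with f(i) = t • v, and for every atom a ∈ A that is satisfied by some image (∃ j ∈ I, j ⊨ a) there is a real s > 0 with g(a) = s • v. In other words, all image embeddings and all embeddings of satisfied atomic descriptions lie on a single common ray. -/
open scoped RealInnerProductSpace

/-- Cosine similarity between two vectors in a real inner product space. -/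
noncomputable def cosSim {L : Type*} [NormedAddCommGroup L] [InnerProductSpace ℝ L]
    (x y : L) : ℝ := ⟪x, y⟫ / (‖x‖ * ‖y‖)

/-- Propositional formulas over a set `A` of atomic descriptions. -/
inductive Formula (A : Type*) : Type _
  | atom : A → Formula A
  | neg  : Formula A → Formula A
  | or   : Formula A → Formula A → Formula A
  | and  : Formula A → Formula A → Formula A

variable {I A L : Type*} [NormedAddCommGroup L] [InnerProductSpace ℝ L]

/-- Satisfaction `i ⊨ d`, defined by recursion on the formula `d`. -/
def Sat (f : I → L) (g : Formula A → L) (i : I) : Formula A → Prop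
  | .atom a => cosSim (f i) (g (.atom a)) > cosSim (f i) (g (.neg (.atom a)))
  | .neg d  => ¬ Sat f g i d
  | .or d e => Sat f g i d ∨ Sat f g i e
  | .and d e => Sat f g i d ∧ Sat f g i e

/-- `I` is describable by `A`. -/
def Describable (f : I → L) (g : Formula A → L) : Prop :=
  (∀ i : I, ∃ a : A, Sat f g i (.atom a)) ∧ (∀ a : A, ∃ i : I, Sat f g i (.atom a))

/-- `(I, A)` is separable. -/
def Separable (f : I → L) (g : Formula A → L) : Prop :=
  (∀ i : I, ∃ a : A, Sat f g i (.neg (.atom a))) ∧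
  (∀ a : A, ∃ i : I, Sat f g i (.neg (.atom a)))

/-- `C` respects basic descriptions. -/
def RespectsBasic (f : I → L) (g : Formula A → L) : Prop :=
  ∀ (i : I) (a : A), Sat f g i (.atom a) → cosSim (f i) (g (.atom a)) = 1

/-- `C` respects negation. -/
def RespectsNeg (f : I → L) (g : Formula A → L) : Prop :=
  ∀ (i : I) (a : A), Sat f g i (.neg (.atom a)) → cosSim (f i) (g (.atom a)) = -1

/-- `C` respects disjunction. -/
def RespectsDisj (f : I → L) (g : Formula A → L) : Prop :=
  ∀ (i : I) (d e : Formula A), Sat f g i (.or d e) → cosSim (f i) (g (.or d e)) = 1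

/-- `C` respects conjunction. -/
def RespectsConj (f : I → L) (g : Formula A → L) : Prop :=
  ∀ (i : I) (d e : Formula A), Sat f g i (.and d e) → cosSim (f i) (g (.and d e)) = 1

/-!
Every image satisfies the tautology `a ∨ ¬a` for any atom `a`, so respecting disjunction puts
all images on the ray of `g (a ∨ ¬a)`; respecting basic descriptions then puts each satisfied atom
on the ray of an image satisfying it. An atom exists as soon as there is an image, by
describability, and without images any nonzero vector will do.
-/

lemma cosSim_eq_one_iff {x y : L} : cosSim x y = 1 ↔ x ≠ 0 ∧ ∃ t : ℝ, 0 < t ∧ y = t • x :=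
  real_inner_div_norm_mul_norm_eq_one_iff x y

section Respects

variable {f : I → L} {g : Formula A → L}

lemma sat_or_neg_self (i : I) (d : Formula A) : Sat f g i (.or d (.neg d)) :=
  em _

lemma RespectsDisj.image_eq_pos_smul (hdisj : RespectsDisj f g) (i : I) (d : Formula A) :
    g (.or d (.neg d)) ≠ 0 ∧ ∃ t : ℝ, 0 < t ∧ f i = t • g (.or d (.neg d)) := by
  refine cosSim_eq_one_iff.mp ?_
  rw [cosSim, real_inner_comm, mul_comm]
  exact hdisj i _ _ (sat_or_neg_self i d)

lemma RespectsBasic.atom_eq_pos_smul (hbasic : RespectsBasic f g) {i : I} {a : A}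
    (hi : Sat f g i (.atom a)) {v : L} {t : ℝ} (ht : 0 < t) (hfi : f i = t • v) :
    ∃ s : ℝ, 0 < s ∧ g (.atom a) = s • v := by
  obtain ⟨-, s, hs, hga⟩ := cosSim_eq_one_iff.mp (hbasic i a hi)
  exact ⟨s * t, mul_pos hs ht, by rw [hga, hfi, smul_smul]⟩

end Respects

theorem lemma1_atomic_general
    [Nontrivial L]
    (f : I → L) (g : Formula A → L)
    (hbasic : RespectsBasic f g) (hdisj : RespectsDisj f g)
    (hdesc : Describable f g) :
    ∃ v : L, v ≠ 0 ∧
      (∀ i : I, ∃ t : ℝ, 0 < t ∧ f i = t • v) ∧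
      (∀ a : A, (∃ j : I, Sat f g j (.atom a)) →
        ∃ s : ℝ, 0 < s ∧ g (.atom a) = s • v) := by
  rcases isEmpty_or_nonempty I with hI | ⟨⟨i₀⟩⟩
  · obtain ⟨v, hv⟩ := exists_ne (0 : L)
    exact ⟨v, hv, hI.elim, fun _ ⟨j, _⟩ => hI.elim j⟩
  obtain ⟨a₀, -⟩ := hdesc.1 i₀
  have hray := hdisj.image_eq_pos_smul (d := .atom a₀)
  refine ⟨_, (hray i₀).1, fun i => (hray i).2, ?_⟩
  rintro a ⟨j, hj⟩
  obtain ⟨t, ht, hfj⟩ := (hray j).2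
  exact hbasic.atom_eq_pos_smul hj ht hfj

/-- **Lemma 1 (atomic form).** All image embeddings and all embeddings of satisfied atomic
descriptions lie on a single common ray. -/
theorem lemma1_atomic
    [Nontrivial L]
    (f : I → L) (g : Formula A → L)
    (hf : ∀ i : I, f i ≠ 0) (hg : ∀ d : Formula A, g d ≠ 0)
    (hbasic : RespectsBasic f g) (hdisj : RespectsDisj f g)
    (hdesc : Describable f g) :
    ∃ v : L, v ≠ 0 ∧
      (∀ i : I, ∃ t : ℝ, 0 < t ∧ f i = t • v) ∧
      (∀ a : A, (∃ j : I, Sat f g j (.atom a)) →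
        ∃ s : ℝ, 0 < s ∧ g (.atom a) = s • v) :=
  lemma1_atomic_general f g hbasic hdisj hdesc
end

section
/- (Corollary 1, part 2, in impossibility form) Suppose C = (f, g) is a CLIP-like model that respects basic descriptions, negation, and disjunction, and I is describable by A. Then for every atom a ∈ A there do not exist images p, q ∈ I with p ⊨ a and q ⊨ ¬a; i.e., no atomic description is simultaneously satisfied by one image and falsified by another (otherwise g(a) would lie in the intersection of a ray with its anti-ray, which is empty). -/
/-!
Cosine similarity is the cosine of the angle between two vectors, so the hypotheses say that
certain angles are `0` or `π`. If `p ⊨ a` and `q ⊨ ¬a`, then both images satisfy `a ∨ ¬a`, so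
`f p` and `f q` each make angle `0` with `g (a ∨ ¬a)`; together with `∠(f p, g a) = 0`, the
triangle inequality for angles forces `∠(f q, g a) = 0`, whereas respecting negation makes it `π`.
-/

open scoped RealInnerProductSpace

variable {I A L : Type*} [NormedAddCommGroup L] [InnerProductSpace ℝ L]

open InnerProductGeometry Real

section Angle

variable {V : Type*} [NormedAddCommGroup V] [InnerProductSpace ℝ V] {x y z : V}

theorem angle_eq_arccos_cosSim (x y : V) : angle x y = arccos (cosSim x y) := rfl

theorem angle_eq_zero_of_cosSim_eq_one (h : cosSim x y = 1) : angle x y = 0 := by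
  rw [angle_eq_arccos_cosSim, h, arccos_one]

theorem angle_eq_pi_of_cosSim_eq_neg_one (h : cosSim x y = -1) : angle x y = π := by
  rw [angle_eq_arccos_cosSim, h, arccos_neg_one]

theorem angle_eq_zero_trans (hxy : angle x y = 0) (hyz : angle y z = 0) : angle x z = 0 :=
  le_antisymm (by simpa [hxy, hyz] using angle_le_angle_add_angle x y z) (angle_nonneg x z)

end Angle

theorem angle_eq_zero_of_sat_or {f : I → L} {g : Formula A → L} (hdisj : RespectsDisj f g)
    {p q : I} {d e : Formula A} (hp : Sat f g p (.or d e)) (hq : Sat f g q (.or d e)) :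
    angle (f p) (f q) = 0 := by
  refine angle_eq_zero_trans (angle_eq_zero_of_cosSim_eq_one (hdisj p d e hp)) ?_
  rw [angle_comm]
  exact angle_eq_zero_of_cosSim_eq_one (hdisj q d e hq)

theorem corollary1_part2_general
    (f : I → L) (g : Formula A → L)
    (hbasic : RespectsBasic f g) (hneg : RespectsNeg f g) (hdisj : RespectsDisj f g) :
    ∀ a : A, ¬ ∃ (p q : I), Sat f g p (.atom a) ∧ Sat f g q (.neg (.atom a)) := by
  rintro a ⟨p, q, hp, hq⟩
  have hqp : angle (f q) (f p) = 0 :=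
    angle_eq_zero_of_sat_or hdisj (e := .neg (.atom a)) (Or.inr hq) (Or.inl hp)
  have h_zero : angle (f q) (g (.atom a)) = 0 :=
    angle_eq_zero_trans hqp (angle_eq_zero_of_cosSim_eq_one (hbasic p a hp))
  have h_pi : angle (f q) (g (.atom a)) = π := angle_eq_pi_of_cosSim_eq_neg_one (hneg q a hq)
  exact Real.pi_ne_zero (h_pi.symm.trans h_zero)

/-- **Corollary 1, part 2 (impossibility form).** No atomic description is simultaneously
satisfied by one image and falsified by another. -/
theorem corollary1_part2
    (f : I → L) (g : Formula A → L)
    (hf : ∀ i : I, f i ≠ 0) (hg : ∀ d : Formula A, g d ≠ 0)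
    (hbasic : RespectsBasic f g) (hneg : RespectsNeg f g) (hdisj : RespectsDisj f g)
    (hdesc : Describable f g) :
    ∀ a : A, ¬ ∃ (p q : I), Sat f g p (.atom a) ∧ Sat f g q (.neg (.atom a)) :=
  corollary1_part2_general f g hbasic hneg hdisj
end
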